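/- Let M be an orthogonal projection (Hermitian matrix with M * M = M) over ℂ indexed by (Fin dA × Fin dB), and let 0 < α ≤ 1 be a real number such that ‖M^Γ‖ ≤ h_SEP(M)^α (real power). Then for every n ≥ 1 and all Euclidean-unit vectors a : (Fin n → Fin dA) → ℂ and b : (Fin n → Fin dB) → ℂ, Re ⟪a ⊗ b, (M^{⊗n}).mulVec (a ⊗ b)⟫ ≤ h_SEP(M)^(α·n). (That is, M's channel obeys weak ∞-norm multiplicativity with exponent α: h_SEP(M^{⊗n}) ≤ h_SEP(M)^{αn}.) -/

import Mathlib

/-! By the definition of the partial transpose, `⟪a ⊗ b, M^{⊗n} (a ⊗ b)⟫ = ⟪a ⊗ b̄, (M^Γ)^{⊗n} (a ⊗ b̄)⟫`,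
because `(M^{⊗n})^Γ = (M^Γ)^{⊗n}`. The right-hand side is at most `‖(M^Γ)^{⊗n}‖ ≤ ‖M^Γ‖^n`, and
`‖M^Γ‖^n ≤ (h_SEP(M)^α)^n = h_SEP(M)^{αn}`; the last equality needs `h_SEP(M) ≥ 0`, which holds
because a projector is positive semidefinite. The operator norm is submultiplicative on Kronecker
products since `X ⊗ Y = (X ⊗ 1)(1 ⊗ Y)` and `X ↦ X ⊗ 1` is a star algebra homomorphism between
C⋆-algebras, hence contractive. -/

open Matrix

noncomputable section

/-- Partial transpose on the second tensor factor. -/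
def ptrans {α β : Type*} (X : Matrix (α × β) (α × β) ℂ) : Matrix (α × β) (α × β) ℂ :=
  fun p q => X (p.1, q.2) (q.1, p.2)

/-- L2 (Euclidean) operator norm of a matrix: the largest singular value. -/
def opNorm {n : Type*} [Fintype n] [DecidableEq n] (X : Matrix n n ℂ) : ℝ :=
  ‖Matrix.toEuclideanCLM (𝕜 := ℂ) X‖

/-- Maximum overlap of `M` with separable (product) states. -/
def hSEP {dA dB : ℕ} (M : Matrix (Fin dA × Fin dB) (Fin dA × Fin dB) ℂ) : ℝ :=
  sSup { x : ℝ | ∃ (a : EuclideanSpace ℂ (Fin dA)) (b : EuclideanSpace ℂ (Fin dB)),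
    ‖a‖ = 1 ∧ ‖b‖ = 1 ∧
    x = (star (fun p : Fin dA × Fin dB => a p.1 * b p.2) ⬝ᵥ
          M.mulVec (fun p : Fin dA × Fin dB => a p.1 * b p.2)).re }

/-- `n`-th tensor power of a bipartite matrix. -/
def tensPow {dA dB : ℕ} (M : Matrix (Fin dA × Fin dB) (Fin dA × Fin dB) ℂ) (n : ℕ) :
    Matrix ((Fin n → Fin dA) × (Fin n → Fin dB)) ((Fin n → Fin dA) × (Fin n → Fin dB)) ℂ :=
  fun p q => ∏ i : Fin n, M (p.1 i, p.2 i) (q.1 i, q.2 i)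

open scoped Matrix.Norms.L2Operator Kronecker ComplexOrder

lemma opNorm_eq_l2_opNorm {n : Type*} [Fintype n] [DecidableEq n] (X : Matrix n n ℂ) :
    opNorm X = ‖X‖ := rfl

section EuclideanVectors

open WithLp

variable {𝕜 ι κ : Type*} [RCLike 𝕜] [Fintype ι] [Fintype κ]

lemma EuclideanSpace.norm_toLp_star (w : ι → 𝕜) : ‖toLp 2 (star w)‖ = ‖toLp 2 w‖ := by
  simp [EuclideanSpace.norm_eq]

lemma EuclideanSpace.norm_toLp_mul (u : ι → 𝕜) (w : κ → 𝕜) :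
    ‖toLp 2 (fun p : ι × κ => u p.1 * w p.2)‖ = ‖toLp 2 u‖ * ‖toLp 2 w‖ := by
  refine (sq_eq_sq₀ (norm_nonneg _) (by positivity)).1 ?_
  simp only [EuclideanSpace.norm_sq_eq, mul_pow, norm_mul, Fintype.sum_prod_type,
    Finset.sum_mul_sum]

lemma Matrix.re_star_dotProduct_mulVec_le [DecidableEq ι] (X : Matrix ι ι 𝕜) (v : ι → 𝕜) :
    RCLike.re (star v ⬝ᵥ X *ᵥ v) ≤ ‖X‖ * ‖toLp 2 v‖ ^ 2 := by
  have h : star v ⬝ᵥ X *ᵥ v = inner 𝕜 (toLp 2 v) (toLp 2 (X *ᵥ v)) := by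
    rw [EuclideanSpace.inner_eq_star_dotProduct, dotProduct_comm]
  calc RCLike.re (star v ⬝ᵥ X *ᵥ v) ≤ ‖toLp 2 v‖ * ‖toLp 2 (X *ᵥ v)‖ :=
        h ▸ re_inner_le_norm _ _
    _ ≤ ‖toLp 2 v‖ * (‖X‖ * ‖toLp 2 v‖) :=
        mul_le_mul_of_nonneg_left (l2_opNorm_mulVec X (toLp 2 v)) (norm_nonneg _)
    _ = ‖X‖ * ‖toLp 2 v‖ ^ 2 := by ring

end EuclideanVectors

namespace Matrix

lemma one_kronecker_eq_reindex {α ι m n : Type*} [CommSemiring α] [DecidableEq ι]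
    (Y : Matrix m n α) :
    (1 : Matrix ι ι α) ⊗ₖ Y = reindex (.prodComm m ι) (.prodComm n ι) (Y ⊗ₖ 1) := by
  ext ⟨i, k⟩ ⟨i', k'⟩
  simp [mul_comm]

variable {ι κ : Type*} [Fintype ι] [DecidableEq ι] [Fintype κ] [DecidableEq κ]

def reindexStarAlgEquiv (e : ι ≃ κ) : Matrix ι ι ℂ ≃⋆ₐ[ℂ] Matrix κ κ ℂ :=
  .ofAlgEquiv (reindexAlgEquiv ℂ ℂ e) fun X => (conjTranspose_reindex e e X).symm

lemma l2_opNorm_reindex (e : ι ≃ κ) (X : Matrix ι ι ℂ) : ‖reindex e e X‖ = ‖X‖ :=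
  StarAlgEquiv.norm_map (reindexStarAlgEquiv e) X

variable (κ) in
def kroneckerOneStarAlgHom : Matrix ι ι ℂ →⋆ₐ[ℂ] Matrix (ι × κ) (ι × κ) ℂ where
  toFun X := X ⊗ₖ 1
  map_one' := one_kronecker_one
  map_mul' X Y := by rw [← mul_kronecker_mul, one_mul]
  map_zero' := zero_kronecker 1
  map_add' X Y := add_kronecker X Y 1
  commutes' r := by
    simp only [Algebra.algebraMap_eq_smul_one, smul_kronecker, one_kronecker_one]
  map_star' X := by
    simp [star_eq_conjTranspose, conjTranspose_kronecker]

lemma l2_opNorm_kronecker_le (X : Matrix ι ι ℂ) (Y : Matrix κ κ ℂ) :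
    ‖X ⊗ₖ Y‖ ≤ ‖X‖ * ‖Y‖ := by
  have hXY : X ⊗ₖ Y = (X ⊗ₖ 1) * ((1 : Matrix ι ι ℂ) ⊗ₖ Y) := by
    rw [← mul_kronecker_mul, mul_one, one_mul]
  calc ‖X ⊗ₖ Y‖ ≤ ‖X ⊗ₖ (1 : Matrix κ κ ℂ)‖ * ‖(1 : Matrix ι ι ℂ) ⊗ₖ Y‖ :=
        hXY ▸ norm_mul_le _ _
    _ ≤ ‖X‖ * ‖Y‖ := by
      rw [one_kronecker_eq_reindex, l2_opNorm_reindex]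
      exact mul_le_mul (NonUnitalStarAlgHom.norm_apply_le (kroneckerOneStarAlgHom κ) X)
        (NonUnitalStarAlgHom.norm_apply_le (kroneckerOneStarAlgHom ι) Y) (norm_nonneg _)
        (norm_nonneg _)

end Matrix

lemma star_dotProduct_ptrans_mulVec {α β : Type*} [Fintype α] [Fintype β]
    (X : Matrix (α × β) (α × β) ℂ) (u : α → ℂ) (w : β → ℂ) :
    star (fun p : α × β => u p.1 * star (w p.2)) ⬝ᵥ
        ptrans X *ᵥ (fun p : α × β => u p.1 * star (w p.2)) =
      star (fun p : α × β => u p.1 * w p.2) ⬝ᵥ X *ᵥ (fun p : α × β => u p.1 * w p.2) := by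
  simp only [dotProduct, mulVec, ptrans, Fintype.sum_prod_type, Finset.mul_sum, Pi.star_apply,
    star_mul', star_star]
  refine Finset.sum_congr rfl fun i _ => ?_
  rw [Finset.sum_comm]
  conv_rhs => rw [Finset.sum_comm]
  refine Finset.sum_congr rfl fun i' _ => ?_
  rw [Finset.sum_comm]
  exact Finset.sum_congr rfl fun j _ => Finset.sum_congr rfl fun j' _ => by ring

lemma hSEP_nonneg {dA dB : ℕ} {M : Matrix (Fin dA × Fin dB) (Fin dA × Fin dB) ℂ}
    (hM : M.PosSemidef) : 0 ≤ hSEP M :=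
  Real.sSup_nonneg <| by
    rintro _ ⟨a, b, -, -, rfl⟩
    exact hM.re_dotProduct_nonneg _

section TensorPower

variable {dA dB : ℕ} (M : Matrix (Fin dA × Fin dB) (Fin dA × Fin dB) ℂ)

lemma tensPow_zero : tensPow M 0 = 1 := by
  ext p q
  obtain rfl := Subsingleton.elim p q
  simp [tensPow]

def tensPowSuccEquiv (n : ℕ) :
    (Fin dA × Fin dB) × ((Fin n → Fin dA) × (Fin n → Fin dB)) ≃
      (Fin (n + 1) → Fin dA) × (Fin (n + 1) → Fin dB) :=
  (Equiv.prodProdProdComm _ _ _ _).trans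
    ((Fin.consEquiv fun _ => Fin dA).prodCongr (Fin.consEquiv fun _ => Fin dB))

lemma tensPow_succ (n : ℕ) :
    tensPow M (n + 1) =
      reindex (tensPowSuccEquiv n) (tensPowSuccEquiv n) (M ⊗ₖ tensPow M n) := by
  ext p q
  simp [tensPow, tensPowSuccEquiv, Fin.prod_univ_succ, Fin.consEquiv, Fin.tail]

lemma ptrans_tensPow (n : ℕ) : ptrans (tensPow M n) = tensPow (ptrans M) n := rfl

lemma l2_opNorm_tensPow_le (n : ℕ) : ‖tensPow M n‖ ≤ ‖M‖ ^ n := by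
  induction n with
  | zero => simp [tensPow_zero]
  | succ n ih =>
    rw [tensPow_succ, l2_opNorm_reindex, pow_succ']
    exact (l2_opNorm_kronecker_le _ _).trans (mul_le_mul_of_nonneg_left ih (norm_nonneg _))

end TensorPower

theorem weak_multiplicativity_of_opNorm_ptrans_le_general {dA dB : ℕ}
    (M : Matrix (Fin dA × Fin dB) (Fin dA × Fin dB) ℂ)
    (hM : M.IsHermitian) (hproj : M * M = M)
    (α : ℝ)
    (hbound : opNorm (ptrans M) ≤ hSEP M ^ α)
    (n : ℕ)
    (a : EuclideanSpace ℂ (Fin n → Fin dA)) (b : EuclideanSpace ℂ (Fin n → Fin dB))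
    (ha : ‖a‖ = 1) (hb : ‖b‖ = 1) :
    (star (fun p : (Fin n → Fin dA) × (Fin n → Fin dB) => a p.1 * b p.2) ⬝ᵥ
        (tensPow M n).mulVec
          (fun p : (Fin n → Fin dA) × (Fin n → Fin dB) => a p.1 * b p.2)).re ≤
      hSEP M ^ (α * n) := by
  have hM_psd : M.PosSemidef := by
    simpa [hM.eq, hproj] using posSemidef_conjTranspose_mul_self M
  rw [opNorm_eq_l2_opNorm] at hbound
  rw [← star_dotProduct_ptrans_mulVec, ptrans_tensPow]
  set v := fun p : (Fin n → Fin dA) × (Fin n → Fin dB) => a p.1 * star (b p.2)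
  have hv : ‖WithLp.toLp 2 v‖ = 1 := by
    refine (EuclideanSpace.norm_toLp_mul (⇑a) (star ⇑b)).trans ?_
    simp [EuclideanSpace.norm_toLp_star, ha, hb]
  calc _ ≤ ‖tensPow (ptrans M) n‖ := by
        simpa [hv] using re_star_dotProduct_mulVec_le (tensPow (ptrans M) n) v
    _ ≤ ‖ptrans M‖ ^ n := l2_opNorm_tensPow_le _ n
    _ ≤ (hSEP M ^ α) ^ n := pow_le_pow_left₀ (norm_nonneg _) hbound n
    _ = hSEP M ^ (α * n) := (Real.rpow_mul_natCast (hSEP_nonneg hM_psd) α n).symm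

/-- Theorem: if `‖M^Γ‖ ≤ h_SEP(M)^α` for a projector `M`, then `M`'s channel obeys weak
∞-norm multiplicativity with exponent `α`: `h_SEP(M^{⊗n}) ≤ h_SEP(M)^{αn}`. -/
theorem weak_multiplicativity_of_opNorm_ptrans_le {dA dB : ℕ}
    (M : Matrix (Fin dA × Fin dB) (Fin dA × Fin dB) ℂ)
    (hM : M.IsHermitian) (hproj : M * M = M)
    (α : ℝ) (hα0 : 0 < α) (hα1 : α ≤ 1)
    (hbound : opNorm (ptrans M) ≤ hSEP M ^ α)
    (n : ℕ) (hn : 1 ≤ n)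
    (a : EuclideanSpace ℂ (Fin n → Fin dA)) (b : EuclideanSpace ℂ (Fin n → Fin dB))
    (ha : ‖a‖ = 1) (hb : ‖b‖ = 1) :
    (star (fun p : (Fin n → Fin dA) × (Fin n → Fin dB) => a p.1 * b p.2) ⬝ᵥ
        (tensPow M n).mulVec
          (fun p : (Fin n → Fin dA) × (Fin n → Fin dB) => a p.1 * b p.2)).re ≤
      hSEP M ^ (α * n) :=
  weak_multiplicativity_of_opNorm_ptrans_le_general M hM hproj α hbound n a b ha hb
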